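/- arXiv:2012.01199 — 4 statements merged into one kernel-verified Lean document; each statement's English description precedes it below -/
import Mathlib

section
/- Let T be a theory with finite relational signature. Then T has a computable sampling if and only if CSP(T) is decidable. -/
/-- A finite-arity relational signature: a type of relation symbols with arities. -/
structure Signature where
  symb : Type
  arity : symb → ℕ

/-- A relational structure over a signature. -/
structure Struct (σ : Signature) where
  dom : Type
  rel : ∀ r : σ.symb, Set (Fin (σ.arity r) → dom)

/-- Atomic formulas over variables `V`: relational atoms, equality, and falsum. -/
inductive Atom (σ : Signature) (V : Type) where
  | rel (r : σ.symb) (v : Fin (σ.arity r) → V)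
  | eq (x y : V)
  | bot

/-- Satisfaction of an atomic formula under an assignment. -/
def Atom.holds {σ : Signature} {V : Type} (A : Struct σ) (s : V → A.dom) :
    Atom σ V → Prop
  | .rel r v => (fun i => s (v i)) ∈ A.rel r
  | .eq x y => s x = s y
  | .bot => False

/-- An assignment satisfies a conjunction (list) of atomic formulas. -/
def satisfies {σ : Signature} {V : Type} (A : Struct σ) (s : V → A.dom)
    (φ : List (Atom σ V)) : Prop :=
  ∀ a ∈ φ, a.holds A s

/-- A conjunction of atomic formulas is satisfiable in a structure. -/
def satisfiable {σ : Signature} {V : Type} (A : Struct σ) (φ : List (Atom σ V)) : Prop :=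
  ∃ s : V → A.dom, satisfies A s φ

/-- The atom is a relational atom (not an equality and not `⊥`). -/
def Atom.isRel {σ : Signature} {V : Type} : Atom σ V → Prop
  | .rel _ _ => True
  | _ => False

/-- The variables occurring in an atom. -/
def Atom.vars {σ : Signature} {V : Type} : Atom σ V → Set V
  | .rel _ v => Set.range v
  | .eq x y => {x, y}
  | .bot => ∅

/-- The canonical database of a conjunction of atomic formulas: the structure on the
variables in which `R` holds on exactly the tuples `t` with `R(t)` a conjunct. -/
def canonicalDB {σ : Signature} {V : Type} (φ : List (Atom σ V)) : Struct σ :=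
  ⟨V, fun r => {v | Atom.rel r v ∈ φ}⟩

/-- Homomorphisms of relational structures. -/
def IsHom {σ : Signature} (A B : Struct σ) (h : A.dom → B.dom) : Prop :=
  ∀ (r : σ.symb) (v : Fin (σ.arity r) → A.dom), v ∈ A.rel r → (fun i => h (v i)) ∈ B.rel r

/-- Code of an atomic formula: `(0, [x, y])` is the equality `x = y`, `(1, _)` is `⊥`,
and `(r + 2, v)` is the relational atom `R_r(v)` (variables are natural numbers). -/
abbrev AtomCode : Type := ℕ × List ℕ

/-- Code of an instance of the CSP: a conjunction (list) of coded atomic formulas. -/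
abbrev InstCode : Type := List AtomCode

/-- Code of a finite structure: the domain size `m` (domain `{0, …, m-1}`) together with
a list of entries `(r, t)` meaning that the tuple `t` is in the relation `R_r`. -/
abbrev StructCode : Type := ℕ × List (ℕ × List ℕ)

/-- Satisfaction of a coded atomic formula in a structure over the finite relational
signature with `K` relation symbols of arities `ar`. -/
def holdsCode {K : ℕ} {ar : Fin K → ℕ} (A : Struct ⟨Fin K, ar⟩) (s : ℕ → A.dom) :
    AtomCode → Prop
  | (0, v) => ∃ x y : ℕ, v = [x, y] ∧ s x = s y
  | (1, _) => False
  | (r + 2, v) => ∃ h : r < K, v.length = ar ⟨r, h⟩ ∧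
      (fun i : Fin (ar ⟨r, h⟩) => s (v.getD i.val 0)) ∈ A.rel ⟨r, h⟩

/-- Satisfaction of a coded atomic formula in a coded finite structure. -/
def holdsInCode (B : StructCode) (s : ℕ → ℕ) : AtomCode → Prop
  | (0, v) => ∃ x y : ℕ, v = [x, y] ∧ s x = s y
  | (1, _) => False
  | (r + 2, v) => (r, v.map s) ∈ B.2

/-- Satisfiability of a coded instance in a coded finite structure. -/
def codeSat (B : StructCode) (φ : InstCode) : Prop :=
  ∃ s : ℕ → ℕ, (∀ x, s x < B.1) ∧ ∀ c ∈ φ, holdsInCode B s c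

/-- Satisfiability of a coded instance in some model of the theory, the theory being
represented semantically by its class `M` of models. -/
def SatM {K : ℕ} {ar : Fin K → ℕ} (M : Set (Struct ⟨Fin K, ar⟩)) (φ : InstCode) : Prop :=
  ∃ A ∈ M, ∃ s : ℕ → A.dom, ∀ c ∈ φ, holdsCode A s c


/-! A sampling decides the CSP: an instance on the variables below `n` is satisfiable iff it
maps homomorphically into a structure of `L n`, and a homomorphism into a finite structure is
found by trying all assignments of the `n` variables.

Conversely, given a decider, let `L n` list the canonical databases of the satisfiable sets of
relational atoms over the variables `0, …, n`. If `φ` holds in a model under `t`, send each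
variable to the least variable with the same `t`-value; this maps `φ` into the canonical database
of all atoms over `0, …, n` that hold under `t`, which is satisfiable. In the other direction a
homomorphism from `φ` into a satisfiable canonical database composes with a satisfying assignment
of that database. -/

open Primrec

theorem List.sections_eq_foldr {α : Type*} (L : List (List α)) :
    L.sections = L.foldr (fun l acc => acc.flatMap fun s => l.map (· :: s)) [[]] := by
  induction L with
  | nil => rfl
  | cons l L ih => simp only [List.sections, ih, List.foldr_cons]

section ListComputability

variable {α β σ : Type*} [Primcodable α] [Primcodable β] [Primcodable σ]

theorem Primrec.list_sections : Primrec (@List.sections α) := by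
  refine Primrec.of_eq ?_ fun L => (List.sections_eq_foldr L).symm
  exact list_foldr Primrec.id (const [[]]) (list_flatMap (snd.comp snd)
    (list_map (fst.comp (snd.comp fst)) (list_cons.comp snd (snd.comp fst)).to₂).to₂).to₂

theorem Primrec.list_sublists : Primrec (@List.sublists α) :=
  list_foldr Primrec.id (const [[]]) (list_flatMap (snd.comp snd)
    (list_cons.comp snd (list_cons.comp (list_cons.comp (fst.comp (snd.comp fst)) snd)
      (const [])).to₂).to₂).to₂

theorem Primrec.list_sum : Primrec (@List.sum ℕ _ _) :=
  (list_foldr Primrec.id (const 0) (nat_add.comp (fst.comp snd) (snd.comp snd)).to₂).of_eq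
    fun _ => List.sum_eq_foldr.symm

theorem Computable.list_filterMap {f : α → List β} {g : α → β → Option σ} (hf : Computable f)
    (hg : Computable₂ g) : Computable fun a => (f a).filterMap (g a) := by
  have hrec : Computable fun a => Nat.rec (motive := fun _ => List σ) []
      (fun k acc => acc ++ ((f a)[k]?.bind (g a)).toList) (f a).length :=
    nat_rec (list_length.comp hf) (const [])
      (list_append.comp (snd.comp snd) (Primrec.optionToList.to_comp.comp
        (option_bind (list_getElem?.comp (hf.comp fst) (fst.comp snd))
          (hg.comp (fst.comp fst) snd).to₂))).to₂
  refine hrec.of_eq fun a => ?_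
  suffices ∀ k, Nat.rec (motive := fun _ => List σ) []
      (fun k acc => acc ++ ((f a)[k]?.bind (g a)).toList) k = ((f a).take k).filterMap (g a) by
    rw [this, List.take_length]
  intro k
  induction k with
  | zero => simp
  | succ k ih =>
    show _ ++ _ = _
    rw [ih, List.take_add_one, List.filterMap_append]
    rcases (f a)[k]? with _ | b
    · rfl
    · cases g a b <;> rfl

theorem PrimrecRel.computablePred_comp {R : α → β → Prop} (hR : PrimrecRel R) {f : σ → α}
    {g : σ → β} (hf : Computable f) (hg : Computable g) : ComputablePred fun x => R (f x) (g x) :=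
  let ⟨_, hR⟩ := hR
  ⟨fun x => inferInstanceAs (Decidable (R (f x, g x).1 (f x, g x).2)),
    hR.to_comp.comp (hf.pair hg)⟩

theorem PrimrecRel.mem_list : PrimrecRel fun (a : α) (l : List α) => a ∈ l :=
  (PrimrecRel.exists_mem_list Primrec.eq).swap.of_eq fun a l => by simp

end ListComputability

def tuples (k m : ℕ) : List (List ℕ) := (List.replicate k (List.range m)).sections

theorem mem_tuples {k m : ℕ} {w : List ℕ} :
    w ∈ tuples k m ↔ w.length = k ∧ ∀ x ∈ w, x < m := by
  rw [tuples, List.mem_sections]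
  induction k generalizing w with
  | zero => simp +contextual
  | succ k ih =>
    cases w with
    | nil => simp
    | cons x w => simp [List.replicate_succ, ih, and_left_comm]

theorem primrec_tuples : Primrec₂ tuples := by
  refine Primrec.of_eq (list_sections.comp (list_map (list_range.comp fst)
    (list_range.comp (snd.comp fst)).to₂)) fun p => ?_
  simp [tuples, List.map_const']

def varBound (φ : InstCode) : ℕ := (φ.flatMap Prod.snd).sum + 1

theorem lt_varBound {φ : InstCode} {c : AtomCode} {x : ℕ} (hc : c ∈ φ) (hx : x ∈ c.2) :
    x < varBound φ :=
  Nat.lt_succ_of_le (List.le_sum_of_mem (List.mem_flatMap.2 ⟨c, hc, hx⟩))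

theorem primrec_varBound : Primrec varBound :=
  succ.comp (list_sum.comp (list_flatMap Primrec.id (snd.comp snd).to₂))

theorem holdsInCode_iff {B : StructCode} {s : ℕ → ℕ} {c : AtomCode} :
    holdsInCode B s c ↔ (c.1 = 0 ∧ c.2.length = 2 ∧ s (c.2.getD 0 0) = s (c.2.getD 1 0)) ∨
      (2 ≤ c.1 ∧ (c.1 - 2, c.2.map s) ∈ B.2) := by
  obtain ⟨_ | _ | r, v⟩ := c
  · constructor
    · rintro ⟨x, y, rfl, h⟩
      simpa using h
    · rintro (⟨-, h, h'⟩ | ⟨h, -⟩)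
      · match v, h with
        | [x, y], _ => exact ⟨x, y, rfl, h'⟩
      · omega
  · simp [holdsInCode]
  · simp [holdsInCode]

theorem holdsInCode_congr {B : StructCode} {s t : ℕ → ℕ} {c : AtomCode}
    (h : ∀ x ∈ c.2, s x = t x) : holdsInCode B s c ↔ holdsInCode B t c := by
  obtain ⟨_ | _ | r, v⟩ := c
  · constructor <;> rintro ⟨x, y, rfl, hxy⟩ <;>
      exact ⟨x, y, rfl, by simpa [h x (by simp), h y (by simp)] using hxy⟩
  · rfl
  · exact iff_of_eq (congrArg (fun v' => (r, v') ∈ B.2) (List.map_congr_left h))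

theorem primrecRel_holdsInCode :
    PrimrecRel fun (c : AtomCode) (q : List ℕ × StructCode) =>
      holdsInCode q.2 (q.1.getD · 0) c := by
  have hvar : ∀ i : ℕ, Primrec fun p : AtomCode × (List ℕ × StructCode) =>
      p.2.1.getD (p.1.2.getD i 0) 0 := fun i =>
    (list_getD 0).comp (fst.comp snd) ((list_getD 0).comp (snd.comp fst) (const i))
  have hmap : Primrec fun p : AtomCode × (List ℕ × StructCode) =>
      p.1.2.map (p.2.1.getD · 0) :=
    list_map (snd.comp fst) ((list_getD 0).comp (fst.comp (snd.comp fst)) snd).to₂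
  have heq : PrimrecPred fun p : AtomCode × (List ℕ × StructCode) =>
      p.1.1 = 0 ∧ p.1.2.length = 2 ∧
        p.2.1.getD (p.1.2.getD 0 0) 0 = p.2.1.getD (p.1.2.getD 1 0) 0 :=
    (Primrec.eq.comp (fst.comp fst) (const 0)).and
      ((Primrec.eq.comp (list_length.comp (snd.comp fst)) (const 2)).and
        (Primrec.eq.comp (hvar 0) (hvar 1)))
  have hrel : PrimrecPred fun p : AtomCode × (List ℕ × StructCode) =>
      2 ≤ p.1.1 ∧ (p.1.1 - 2, p.1.2.map (p.2.1.getD · 0)) ∈ p.2.2.2 :=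
    (nat_le.comp (const 2) (fst.comp fst)).and
      (PrimrecRel.mem_list.comp ((nat_sub.comp (fst.comp fst) (const 2)).pair hmap)
        (snd.comp (snd.comp snd)))
  exact (heq.or hrel).of_eq fun p => (holdsInCode_iff (s := (p.2.1.getD · 0))).symm

-- `codeSat` bounds the values of all variables, so it fails on an empty domain even for `φ = []`.
theorem codeSat_iff_exists_mem_tuples {n : ℕ} {B : StructCode} {φ : InstCode}
    (hφ : ∀ c ∈ φ, ∀ x ∈ c.2, x < n) :
    codeSat B φ ↔ 0 < B.1 ∧ ∃ w ∈ tuples n B.1, ∀ c ∈ φ, holdsInCode B (w.getD · 0) c := by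
  constructor
  · rintro ⟨s, hs, hφs⟩
    refine ⟨(Nat.zero_le _).trans_lt (hs 0), (List.range n).map s, ?_, fun c hc => ?_⟩
    · simpa [mem_tuples] using fun i _ => hs i
    · refine (holdsInCode_congr fun x hx => ?_).1 (hφs c hc)
      simp [List.getD_eq_getElem?_getD, List.getElem?_range (hφ c hc x hx)]
  · rintro ⟨hB, w, hw, hwφ⟩
    refine ⟨(w.getD · 0), fun x => ?_, hwφ⟩
    rw [mem_tuples] at hw
    show w.getD x 0 < B.1
    rw [List.getD_eq_getElem?_getD]
    cases h : w[x]? with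
    | none => exact hB
    | some y => exact hw.2 y (List.mem_of_getElem? h)

theorem primrecRel_codeSat : PrimrecRel codeSat := by
  have hall : PrimrecRel fun (w : List ℕ) (p : StructCode × InstCode) =>
      ∀ c ∈ p.2, holdsInCode p.1 (w.getD · 0) c :=
    (PrimrecRel.forall_mem_list primrecRel_holdsInCode).comp (snd.comp snd)
      (fst.pair (fst.comp snd))
  refine ((nat_lt.comp (const 0) (fst.comp fst)).and ((PrimrecRel.exists_mem_list hall).comp
    (primrec_tuples.comp (primrec_varBound.comp snd) (fst.comp fst)) Primrec.id)).of_eq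
    fun p => (codeSat_iff_exists_mem_tuples fun c hc x hx => lt_varBound hc hx).symm

section FiniteSignature

variable {K : ℕ} {ar : Fin K → ℕ}

theorem holdsCode_congr {A : Struct ⟨Fin K, ar⟩} {s t : ℕ → A.dom} {c : AtomCode}
    (h : ∀ x ∈ c.2, s x = t x) : holdsCode A s c ↔ holdsCode A t c := by
  obtain ⟨_ | _ | r, v⟩ := c
  · constructor <;> rintro ⟨x, y, rfl, hxy⟩ <;>
      exact ⟨x, y, rfl, by simpa [h x (by simp), h y (by simp)] using hxy⟩
  · rfl
  · refine exists_congr fun hr => and_congr_right fun hlen => ?_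
    have hv : ∀ i : Fin (ar ⟨r, hr⟩), s (v.getD i 0) = t (v.getD i 0) := fun i => by
      have hi : (i : ℕ) < v.length := by rw [hlen]; exact i.isLt
      exact h _ (List.getD_eq_getElem v 0 hi ▸ List.getElem_mem hi)
    simp only [hv]

theorem holdsCode_map_iff {A : Struct ⟨Fin K, ar⟩} (t : ℕ → A.dom) (s : ℕ → ℕ) (k : ℕ)
    (v : List ℕ) : holdsCode A t (k, v.map s) ↔ holdsCode A (t ∘ s) (k, v) := by
  rcases k with _ | _ | r
  · constructor
    · rintro ⟨x, y, hv, hxy⟩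
      match v, hv with
      | [a, b], hv =>
        obtain ⟨rfl, rfl⟩ : s a = x ∧ s b = y := by simpa using hv
        exact ⟨a, b, rfl, hxy⟩
    · rintro ⟨x, y, rfl, hxy⟩
      exact ⟨s x, s y, rfl, hxy⟩
  · rfl
  · refine exists_congr fun hr => ?_
    rw [List.length_map]
    refine and_congr_right fun hlen => ?_
    have hv : ∀ i : Fin (ar ⟨r, hr⟩), (v.map s).getD i 0 = s (v.getD i 0) := fun i => by
      rw [List.getD_eq_getElem _ _ (by simp [hlen]), List.getD_eq_getElem _ _ (by simp [hlen]),
        List.getElem_map]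
    simp only [hv, Function.comp_apply]

def canonicalQuery (l : List (ℕ × List ℕ)) : InstCode := l.map fun e => (e.1 + 2, e.2)

theorem primrec_canonicalQuery : Primrec canonicalQuery :=
  list_map Primrec.id ((succ.comp (succ.comp (fst.comp snd))).pair (snd.comp snd)).to₂

theorem SatM.of_codeSat {M : Set (Struct ⟨Fin K, ar⟩)} {m : ℕ} {l : List (ℕ × List ℕ)}
    {φ : InstCode} (hl : SatM M (canonicalQuery l)) (hφ : codeSat (m, l) φ) : SatM M φ := by
  obtain ⟨A, hA, t, ht⟩ := hl
  obtain ⟨s, -, hs⟩ := hφ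
  refine ⟨A, hA, t ∘ s, fun c hc => ?_⟩
  obtain ⟨_ | _ | r, v⟩ := c
  · obtain ⟨x, y, rfl, hxy⟩ := hs _ hc
    exact ⟨x, y, rfl, congrArg t hxy⟩
  · exact (hs _ hc).elim
  · exact (holdsCode_map_iff t s _ v).1 (ht _ (List.mem_map.2 ⟨_, hs _ hc, rfl⟩))

def allAtoms (ar : Fin K → ℕ) (n : ℕ) : List (ℕ × List ℕ) :=
  (List.finRange K).flatMap fun r => (tuples (ar r) (n + 1)).map fun w => (r.val, w)

theorem mk_mem_allAtoms {n : ℕ} {r : Fin K} {w : List ℕ} (hw : w.length = ar r)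
    (hn : ∀ x ∈ w, x ≤ n) : (r.val, w) ∈ allAtoms ar n :=
  List.mem_flatMap.2 ⟨r, List.mem_finRange r,
    List.mem_map.2 ⟨w, mem_tuples.2 ⟨hw, fun x hx => Nat.lt_succ_of_le (hn x hx)⟩, rfl⟩⟩

theorem primrec_allAtoms : Primrec (allAtoms ar) :=
  list_flatMap (const _)
    (list_map (primrec_tuples.comp ((dom_finite ar).comp snd) (succ.comp fst))
      (((dom_finite Fin.val).comp (snd.comp fst)).pair snd).to₂).to₂

theorem exists_bounded_representatives {α : Type*} (t : ℕ → α) (n : ℕ) :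
    ∃ ρ : ℕ → ℕ, (∀ x, ρ x ≤ n) ∧ (∀ x < n, t (ρ x) = t x) ∧
      ∀ x < n, ∀ y < n, t x = t y → ρ x = ρ y := by
  refine ⟨fun x => sInf {y | t y = t (min x n)}, fun x => ?_, fun x hx => ?_,
    fun x hx y hy hxy => ?_⟩
  · exact (Nat.sInf_le (show min x n ∈ {y | t y = t (min x n)} from rfl)).trans
      (min_le_right x n)
  · simpa [min_eq_left hx.le] using
      Nat.sInf_mem (⟨min x n, rfl⟩ : {y | t y = t (min x n)}.Nonempty)
  · simp only [min_eq_left hx.le, min_eq_left hy.le, hxy]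

theorem SatM.exists_sublist_allAtoms {M : Set (Struct ⟨Fin K, ar⟩)} {n : ℕ} {φ : InstCode}
    (hφ : ∀ c ∈ φ, ∀ x ∈ c.2, x < n) (h : SatM M φ) :
    ∃ l : List (ℕ × List ℕ), l.Sublist (allAtoms ar n) ∧ SatM M (canonicalQuery l) ∧
      codeSat (n + 1, l) φ := by
  classical
  obtain ⟨A, hA, t, ht⟩ := h
  obtain ⟨ρ, hρn, hρt, hρt_inj⟩ := exists_bounded_representatives t n
  refine ⟨(allAtoms ar n).filter fun e => holdsCode A t (e.1 + 2, e.2), List.filter_sublist,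
    ⟨A, hA, t, fun c hc => ?_⟩, ρ, fun x => Nat.lt_succ_of_le (hρn x), fun c hc => ?_⟩
  · obtain ⟨e, he, rfl⟩ := List.mem_map.1 hc
    exact of_decide_eq_true (List.mem_filter.1 he).2
  obtain ⟨_ | _ | r, v⟩ := c
  · obtain ⟨x, y, rfl, hxy⟩ := ht _ hc
    exact ⟨x, y, rfl, hρt_inj x (hφ _ hc x (by simp)) y (hφ _ hc y (by simp)) hxy⟩
  · exact (ht _ hc).elim
  · have hv : holdsCode A t (r + 2, v.map ρ) :=
      (holdsCode_map_iff t ρ _ v).2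
        ((holdsCode_congr fun x hx => hρt x (hφ _ hc x hx)).2 (ht _ hc))
    obtain ⟨hr, hlen, -⟩ := id hv
    refine List.mem_filter.2 ⟨mk_mem_allAtoms (r := ⟨r, hr⟩) hlen ?_, decide_eq_true hv⟩
    simpa using fun x _ => hρn x

def sampling (ar : Fin K → ℕ) (f : InstCode → Bool) (n : ℕ) : List StructCode :=
  (allAtoms ar n).sublists.filterMap fun l =>
    bif f (canonicalQuery l) then some (n + 1, l) else none

theorem mem_sampling {f : InstCode → Bool} {n : ℕ} {B : StructCode} :
    B ∈ sampling ar f n ↔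
      ∃ l : List (ℕ × List ℕ), l.Sublist (allAtoms ar n) ∧ f (canonicalQuery l) = true ∧
        (n + 1, l) = B := by
  simp only [sampling, List.mem_filterMap, List.mem_sublists]
  refine exists_congr fun l => and_congr_right fun _ => ?_
  cases f (canonicalQuery l) <;> simp

theorem computable_sampling (ar : Fin K → ℕ) {f : InstCode → Bool} (hf : Computable f) :
    Computable (sampling ar f) :=
  Computable.list_filterMap (list_sublists.comp primrec_allAtoms).to_comp
    (Computable.cond (hf.comp (primrec_canonicalQuery.to_comp.comp Computable.snd))
      (option_some.comp ((succ.comp fst).pair snd)).to_comp (Computable.const none)).to₂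

end FiniteSignature

/-- a theory with finite relational signature has a computable sampling iff
its CSP is decidable. -/
theorem stmt_3 {K : ℕ} {ar : Fin K → ℕ} (M : Set (Struct ⟨Fin K, ar⟩)) :
    (∃ L : ℕ → List StructCode, Computable L ∧
        ∀ (n : ℕ) (φ : InstCode), (∀ c ∈ φ, ∀ x ∈ c.2, x < n) →
          (SatM M φ ↔ ∃ B ∈ L n, codeSat B φ)) ↔
      ComputablePred (fun φ : InstCode => SatM M φ) := by
  constructor
  · rintro ⟨L, hL, hLM⟩
    exact ((PrimrecRel.exists_mem_list primrecRel_codeSat).computablePred_comp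
      (hL.comp primrec_varBound.to_comp) Computable.id).of_eq
      fun φ => (hLM _ φ fun c hc x hx => lt_varBound hc hx).symm
  · intro hdec
    obtain ⟨f, hf, hfM⟩ := ComputablePred.computable_iff.1 hdec
    have hsat : ∀ ψ, SatM M ψ ↔ f ψ = true := fun ψ => iff_of_eq (congrFun hfM ψ)
    refine ⟨sampling ar f, computable_sampling ar hf, fun n φ hφ => ⟨fun h => ?_, ?_⟩⟩
    · obtain ⟨l, hl, hlM, hlφ⟩ := h.exists_sublist_allAtoms hφ
      exact ⟨_, mem_sampling.2 ⟨l, hl, (hsat _).1 hlM, rfl⟩, hlφ⟩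
    · rintro ⟨B, hB, hBφ⟩
      obtain ⟨l, -, hl, rfl⟩ := mem_sampling.1 hB
      exact SatM.of_codeSat ((hsat _).2 hl) hBφ
end

section
/- The structure (ℚ; <) has no pp-algebraicity: for any primitive positive formula φ(x) over the signature {<} with parameters a₁,…,aₙ ∈ ℚ, the set {b ∈ ℚ : (ℚ;<) ⊨ φ(b)} is either contained in {a₁,…,aₙ} or infinite. -/
/-- Primitive positive formulas over the signature `{<}` (with equality), with free
variables from `V`: atomic formulas `x < y` and `x = y`, conjunction, and existential
quantification (which introduces a fresh variable). -/
inductive PPQ : Type → Type 1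
  | lt {V : Type} (x y : V) : PPQ V
  | eq {V : Type} (x y : V) : PPQ V
  | conj {V : Type} (f g : PPQ V) : PPQ V
  | ex {V : Type} (f : PPQ (Option V)) : PPQ V

/-- Evaluation of a primitive positive formula in `(ℚ; <)` under an assignment. -/
def PPQ.eval : {V : Type} → (V → ℚ) → PPQ V → Prop
  | _, s, .lt x y => s x < s y
  | _, s, .eq x y => s x = s y
  | _, s, .conj f g => f.eval s ∧ g.eval s
  | _, s, .ex f => ∃ q : ℚ, f.eval (fun v => v.elim q s)

/-- pp formulas are preserved by strictly monotone self-maps of `ℚ`. -/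
lemma PPQ.eval_comp (g : ℚ → ℚ) (hg : StrictMono g) :
    ∀ {V : Type} (f : PPQ V) (s : V → ℚ), f.eval s → f.eval (g ∘ s) := by
  intro V f
  induction f with
  | lt x y => intro s h; exact hg h
  | eq x y => intro s h; exact congrArg g h
  | conj p q ihp ihq => intro s h; exact ⟨ihp s h.1, ihq s h.2⟩
  | ex p ih =>
    intro s h
    obtain ⟨q, hq⟩ := h
    refine ⟨g q, ?_⟩
    have h2 := ih _ hq
    have heq : (g ∘ fun v => Option.elim v q s) = (fun v => Option.elim v (g q) (g ∘ s)) := by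
      funext v; cases v <;> rfl
    rw [heq] at h2
    exact h2

/-- `(ℚ; <)` has no pp-algebraicity: for every primitive positive formula
`φ(x)` with parameters `a₁, …, aₙ ∈ ℚ`, the solution set `{b ∈ ℚ : (ℚ;<) ⊨ φ(b)}` is
contained in `{a₁, …, aₙ}` or infinite. -/
theorem stmt_7 (n : ℕ) (f : PPQ (Fin (n + 1))) (a : Fin n → ℚ) :
    {b : ℚ | f.eval (Fin.cons b a)} ⊆ Set.range a ∨
      {b : ℚ | f.eval (Fin.cons b a)}.Infinite := by
  by_cases hsub : {b : ℚ | f.eval (Fin.cons b a)} ⊆ Set.range a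
  · exact Or.inl hsub
  right
  obtain ⟨b, hb, hbn⟩ := Set.not_subset.mp hsub
  -- choose ε > 0 smaller than all |a i - b|
  set S : Finset ℚ := insert 1 (Finset.image (fun i => |a i - b|) Finset.univ) with hS
  have hSne : S.Nonempty := ⟨1, Finset.mem_insert_self _ _⟩
  set ε : ℚ := S.min' hSne with hεdef
  have hεpos : 0 < ε := by
    rw [hεdef, Finset.lt_min'_iff]
    intro x hx
    rw [hS, Finset.mem_insert] at hx
    rcases hx with rfl | hx
    · norm_num
    · obtain ⟨i, _, rfl⟩ := Finset.mem_image.mp hx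
      have : a i ≠ b := fun h => hbn ⟨i, h⟩
      exact abs_pos.mpr (sub_ne_zero.mpr this)
  have hεle : ∀ i, ε ≤ |a i - b| := by
    intro i
    exact Finset.min'_le _ _ (Finset.mem_insert_of_mem (Finset.mem_image_of_mem _ (Finset.mem_univ i)))
  set c : ℚ := b - ε with hc
  set d : ℚ := b + ε with hd
  set H : ℚ → ℚ := fun x => max (min (x - c) (d - x)) 0 with hH
  set g : ℚ → ℚ := fun x => x + H x / 2 with hg
  -- H is 1-Lipschitz
  have hlip : ∀ x y : ℚ, |H y - H x| ≤ |y - x| := by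
    intro x y
    calc |H y - H x| ≤ |min (y - c) (d - y) - min (x - c) (d - x)| :=
          abs_max_sub_max_le_abs _ _ _
      _ ≤ max |(y - c) - (x - c)| |(d - y) - (d - x)| := abs_min_sub_min_le_max _ _ _ _
      _ ≤ |y - x| := by
          apply max_le
          · apply le_of_eq; ring_nf
          · rw [show (d - y) - (d - x) = -(y - x) by ring, abs_neg]
  have hgmono : StrictMono g := by
    intro x y hxy
    have h1 := hlip x y
    have h2 : |y - x| = y - x := abs_of_pos (by linarith)
    have h3 : H x - H y ≤ y - x := by
      have := neg_abs_le (H y - H x)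
      linarith [h1]
    simp only [hg]
    linarith
  have hHnn : ∀ x, 0 ≤ H x := fun x => le_max_right _ _
  have hgge : ∀ x, x ≤ g x := fun x => by simp only [hg]; linarith [hHnn x]
  have hglt : ∀ x, x < d → g x < d := by
    intro x hx
    have h1 : H x ≤ d - x := max_le (min_le_right _ _) (by linarith)
    simp only [hg]; linarith
  have hfix : ∀ i, g (a i) = a i := by
    intro i
    have h1 : ε ≤ |a i - b| := hεle i
    have h2 : H (a i) = 0 := by
      rcases le_abs.mp h1 with h | h
      · -- a i ≥ d
        have : d - a i ≤ 0 := by rw [hd]; linarith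
        exact max_eq_right (le_trans (min_le_right _ _) this)
      · -- a i ≤ c
        have : a i - c ≤ 0 := by rw [hc]; linarith
        exact max_eq_right (le_trans (min_le_left _ _) this)
    simp only [hg, h2]; ring
  -- orbit of b under g
  set u : ℕ → ℚ := fun k => g^[k] b with hu
  have hkey : ∀ k, f.eval (Fin.cons (u k) a) ∧ b ≤ u k ∧ u k < d := by
    intro k
    induction k with
    | zero =>
      refine ⟨hb, le_refl b, ?_⟩
      have h0 : u 0 = b := rfl
      rw [h0, hd]; linarith
    | succ k ih =>
      obtain ⟨ih1, ih2, ih3⟩ := ih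
      have huk : u (k + 1) = g (u k) := by
        simp only [hu, Function.iterate_succ_apply']
      have heval : f.eval (Fin.cons (g (u k)) a) := by
        have h2 := PPQ.eval_comp g hgmono f (Fin.cons (u k) a) ih1
        have heq : (g ∘ Fin.cons (u k) a) = Fin.cons (g (u k)) a := by
          funext v
          refine Fin.cases ?_ ?_ v
          · rfl
          · intro i; simp [hfix i]
        rwa [heq] at h2
      exact ⟨huk ▸ heval, huk ▸ le_trans ih2 (hgge _), huk ▸ hglt _ ih3⟩
  have humono : StrictMono u := by
    apply strictMono_nat_of_lt_succ
    intro k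
    obtain ⟨_, h2, h3⟩ := hkey k
    have huk : u (k + 1) = g (u k) := by
      simp only [hu, Function.iterate_succ_apply']
    have hHpos : 0 < H (u k) := by
      apply lt_max_of_lt_left
      apply lt_min
      · rw [hc]; linarith
      · linarith
    rw [huk]
    simp only [hg]
    linarith
  exact Set.infinite_of_injective_forall_mem humono.injective (fun k => (hkey k).1)
end

section
/- Let B₁ be a τ₁-structure and B₂ a τ₂-structure with disjoint relational signatures. Define the (τ₁ ∪ τ₂)-structure M with domain B₁ × B₂ where, for R ∈ τ₁ of arity k, ((a₁,b₁),…,(a_k,b_k)) ∈ R^M iff (for all i,j: aᵢ = a_j ⟺ bᵢ = b_j) and (a₁,…,a_k) ∈ R^{B₁}, and symmetrically for R ∈ τ₂ using the second coordinates. If h₁ : D(φ₁) → B₁ and h₂ : D(φ₂) → B₂ are homomorphisms (for conjunctions φ₁ of atomic τ₁-formulas and φ₂ of atomic τ₂-formulas on the same variable set) that identify exactly the same pairs of variables, then x ↦ (h₁(x), h₂(x)) is a homomorphism from D(φ₁ ∧ φ₂) to M. -/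
/-- The union of two disjoint relational signatures. -/
def Signature.sum (σ₁ σ₂ : Signature) : Signature :=
  ⟨σ₁.symb ⊕ σ₂.symb, Sum.elim σ₁.arity σ₂.arity⟩

/-- View an atomic `τ₁`-formula as an atomic `(τ₁ ∪ τ₂)`-formula. -/
def Atom.mapL {σ₁ σ₂ : Signature} {V : Type} : Atom σ₁ V → Atom (σ₁.sum σ₂) V
  | .rel r v => .rel (Sum.inl r) v
  | .eq x y => .eq x y
  | .bot => .bot

/-- View an atomic `τ₂`-formula as an atomic `(τ₁ ∪ τ₂)`-formula. -/
def Atom.mapR {σ₁ σ₂ : Signature} {V : Type} : Atom σ₂ V → Atom (σ₁.sum σ₂) V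
  | .rel r v => .rel (Sum.inr r) v
  | .eq x y => .eq x y
  | .bot => .bot

/-- The product-style `(τ₁ ∪ τ₂)`-structure on `B₁ × B₂`: a relation of `τ₁` holds on a
tuple iff any two entries agree in the first coordinate exactly when they agree in the
second coordinate, and the first coordinates form a tuple of the relation in `B₁`;
symmetrically for `τ₂`. -/
def prodStruct {σ₁ σ₂ : Signature} (B₁ : Struct σ₁) (B₂ : Struct σ₂) :
    Struct (σ₁.sum σ₂) :=
  ⟨B₁.dom × B₂.dom, fun r =>
    match r with
    | Sum.inl r => {v | (∀ i j, (v i).1 = (v j).1 ↔ (v i).2 = (v j).2) ∧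
        (fun i => (v i).1) ∈ B₁.rel r}
    | Sum.inr r => {v | (∀ i j, (v i).1 = (v j).1 ↔ (v i).2 = (v j).2) ∧
        (fun i => (v i).2) ∈ B₂.rel r}⟩

namespace Atom

variable {σ₁ σ₂ : Signature} {V : Type}

theorem mapL_eq_rel_inl_iff (a : Atom σ₁ V) (r : σ₁.symb) (v : Fin (σ₁.arity r) → V) :
    (a.mapL : Atom (σ₁.sum σ₂) V) = .rel (Sum.inl r) v ↔ a = .rel r v := by
  cases a with
  | rel => constructor <;> rintro ⟨⟩ <;> rfl
  | eq | bot => simp [mapL]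

theorem mapR_eq_rel_inr_iff (a : Atom σ₂ V) (r : σ₂.symb) (v : Fin (σ₂.arity r) → V) :
    (a.mapR : Atom (σ₁.sum σ₂) V) = .rel (Sum.inr r) v ↔ a = .rel r v := by
  cases a with
  | rel => constructor <;> rintro ⟨⟩ <;> rfl
  | eq | bot => simp [mapR]

theorem mapR_ne_rel_inl (a : Atom σ₂ V) (r : σ₁.symb) (v : Fin (σ₁.arity r) → V) :
    (a.mapR : Atom (σ₁.sum σ₂) V) ≠ .rel (Sum.inl r) v := by
  cases a <;> rintro ⟨⟩

theorem mapL_ne_rel_inr (a : Atom σ₁ V) (r : σ₂.symb) (v : Fin (σ₂.arity r) → V) :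
    (a.mapL : Atom (σ₁.sum σ₂) V) ≠ .rel (Sum.inr r) v := by
  cases a <;> rintro ⟨⟩

end Atom

section CanonicalDB

variable {σ₁ σ₂ : Signature} {V : Type} (φ₁ : List (Atom σ₁ V)) (φ₂ : List (Atom σ₂ V))

theorem canonicalDB_append_rel_inl (r : σ₁.symb) (v : Fin (σ₁.arity r) → V) :
    v ∈ (canonicalDB (φ₁.map Atom.mapL ++ φ₂.map Atom.mapR :
        List (Atom (σ₁.sum σ₂) V))).rel (Sum.inl r) ↔
      v ∈ (canonicalDB φ₁).rel r := by
  change Atom.rel (σ := σ₁.sum σ₂) (Sum.inl r) v ∈ φ₁.map Atom.mapL ++ φ₂.map Atom.mapR ↔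
    Atom.rel r v ∈ φ₁
  simp [Atom.mapL_eq_rel_inl_iff, Atom.mapR_ne_rel_inl]

theorem canonicalDB_append_rel_inr (r : σ₂.symb) (v : Fin (σ₂.arity r) → V) :
    v ∈ (canonicalDB (φ₁.map Atom.mapL ++ φ₂.map Atom.mapR :
        List (Atom (σ₁.sum σ₂) V))).rel (Sum.inr r) ↔
      v ∈ (canonicalDB φ₂).rel r := by
  change Atom.rel (σ := σ₁.sum σ₂) (Sum.inr r) v ∈ φ₁.map Atom.mapL ++ φ₂.map Atom.mapR ↔
    Atom.rel r v ∈ φ₂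
  simp [Atom.mapR_eq_rel_inr_iff, Atom.mapL_ne_rel_inr]

end CanonicalDB

section ProdStruct

variable {σ₁ σ₂ : Signature} {V : Type} (B₁ : Struct σ₁) (B₂ : Struct σ₂)
  {h₁ : V → B₁.dom} {h₂ : V → B₂.dom}

theorem mem_prodStruct_rel_inl (hsame : ∀ x y : V, h₁ x = h₁ y ↔ h₂ x = h₂ y)
    (r : σ₁.symb) (v : Fin (σ₁.arity r) → V) :
    (fun i => (h₁ (v i), h₂ (v i))) ∈ (prodStruct B₁ B₂).rel (Sum.inl r) ↔
      (fun i => h₁ (v i)) ∈ B₁.rel r :=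
  and_iff_right fun i j => hsame (v i) (v j)

theorem mem_prodStruct_rel_inr (hsame : ∀ x y : V, h₁ x = h₁ y ↔ h₂ x = h₂ y)
    (r : σ₂.symb) (v : Fin (σ₂.arity r) → V) :
    (fun i => (h₁ (v i), h₂ (v i))) ∈ (prodStruct B₁ B₂).rel (Sum.inr r) ↔
      (fun i => h₂ (v i)) ∈ B₂.rel r :=
  and_iff_right fun i j => hsame (v i) (v j)

end ProdStruct

theorem stmt_11_general {σ₁ σ₂ : Signature} {V : Type} (B₁ : Struct σ₁) (B₂ : Struct σ₂)
    (φ₁ : List (Atom σ₁ V)) (φ₂ : List (Atom σ₂ V))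
    (h₁ : V → B₁.dom) (h₂ : V → B₂.dom)
    (hhom₁ : IsHom (canonicalDB φ₁) B₁ h₁) (hhom₂ : IsHom (canonicalDB φ₂) B₂ h₂)
    (hsame : ∀ x y : V, h₁ x = h₁ y ↔ h₂ x = h₂ y) :
    IsHom (canonicalDB (φ₁.map Atom.mapL ++ φ₂.map Atom.mapR)) (prodStruct B₁ B₂)
      (fun x => (h₁ x, h₂ x)) := by
  rintro (r | r) v hv
  · exact (mem_prodStruct_rel_inl B₁ B₂ hsame r v).2
      (hhom₁ r v ((canonicalDB_append_rel_inl φ₁ φ₂ r v).1 hv))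
  · exact (mem_prodStruct_rel_inr B₁ B₂ hsame r v).2
      (hhom₂ r v ((canonicalDB_append_rel_inr φ₁ φ₂ r v).1 hv))

/-- if `h₁ : D(φ₁) → B₁` and `h₂ : D(φ₂) → B₂` are homomorphisms that
identify exactly the same pairs of variables, then `x ↦ (h₁ x, h₂ x)` is a homomorphism
from `D(φ₁ ∧ φ₂)` to the product-style structure on `B₁ × B₂`. -/
theorem stmt_11 {σ₁ σ₂ : Signature} {V : Type} (B₁ : Struct σ₁) (B₂ : Struct σ₂)
    (φ₁ : List (Atom σ₁ V)) (φ₂ : List (Atom σ₂ V))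
    (hrel₁ : ∀ a ∈ φ₁, a.isRel) (hrel₂ : ∀ a ∈ φ₂, a.isRel)
    (h₁ : V → B₁.dom) (h₂ : V → B₂.dom)
    (hhom₁ : IsHom (canonicalDB φ₁) B₁ h₁) (hhom₂ : IsHom (canonicalDB φ₂) B₂ h₂)
    (hsame : ∀ x y : V, h₁ x = h₁ y ↔ h₂ x = h₂ y) :
    IsHom (canonicalDB (φ₁.map Atom.mapL ++ φ₂.map Atom.mapR)) (prodStruct B₁ B₂)
      (fun x => (h₁ x, h₂ x)) :=
  stmt_11_general B₁ B₂ φ₁ φ₂ h₁ h₂ hhom₁ hhom₂ hsame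
end

section
/- With M the product-style (τ₁ ∪ τ₂)-structure on B₁ × B₂ (relations requiring, in addition to the coordinate relation, that any two entries of a related tuple agree in the first coordinate iff they agree in the second), suppose h : D(φ₁ ∧ φ₂) → M is an injective homomorphism in which two variables x, y satisfy π₁(h(x)) = π₁(h(y)). Then no conjunct of φ₁ contains both x and y; consequently φ₁ is equivalent to a conjunction ⋀ᵢ ψᵢ where the variables mapped by h to a common first coordinate are separated into distinct conjuncts ψᵢ. -/
/-- if `h` is an injective homomorphism from `D(φ₁ ∧ φ₂)` to the
product-style structure on `B₁ × B₂`, then no conjunct of `φ₁` contains two distinct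
variables whose `h`-images share the same first coordinate; i.e., `φ₁` splits into
conjuncts in which the variables sent by `h` to a common first coordinate are separated. -/
theorem stmt_12 {σ₁ σ₂ : Signature} {V : Type} (B₁ : Struct σ₁) (B₂ : Struct σ₂)
    (φ₁ : List (Atom σ₁ V)) (φ₂ : List (Atom σ₂ V))
    (hrel₁ : ∀ a ∈ φ₁, a.isRel) (hrel₂ : ∀ a ∈ φ₂, a.isRel)
    (h : V → (prodStruct B₁ B₂).dom) (hinj : Function.Injective h)
    (hhom : IsHom (canonicalDB (φ₁.map Atom.mapL ++ φ₂.map Atom.mapR))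
      (prodStruct B₁ B₂) h) :
    ∀ a ∈ φ₁, ∀ x ∈ a.vars, ∀ y ∈ a.vars, (h x).1 = (h y).1 → x = y := by
  intro a ha x hx y hy hxy
  cases a with
  | rel r v =>
    have hmem : Atom.rel (Sum.inl r) v ∈ (φ₁.map Atom.mapL ++ φ₂.map Atom.mapR) := by
      apply List.mem_append_left
      exact List.mem_map.mpr ⟨_, ha, rfl⟩
    have := hhom (Sum.inl r) v hmem
    obtain ⟨hcoord, -⟩ := this
    obtain ⟨i, rfl⟩ := hx
    obtain ⟨j, rfl⟩ := hy
    exact hinj (Prod.ext hxy ((hcoord i j).mp hxy))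
  | eq x' y' => exact absurd (hrel₁ _ ha) (by simp [Atom.isRel])
  | bot => exact absurd (hrel₁ _ ha) (by simp [Atom.isRel])
end
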